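/- arXiv:1704.04566 — 2 statements merged into one kernel-verified Lean document; each statement's English description precedes it below -/
import Mathlib

section
/- Let K_θ, K, D_max, ε be positive constants. Let x, y, θ, x_d, y_d, θ_d : ℝ → ℝ and fix a time t₀ at which x_d, y_d, θ_d are differentiable. Define e_x = x − x_d, e_y = y − y_d, e_θ = θ − θ_d, and D = √(e_x² + e_y²), and assume D(t₀) > 0, cos(θ_d(t₀)) = −e_x(t₀)/D(t₀), and sin(θ_d(t₀)) = −e_y(t₀)/D(t₀). Suppose that at t₀: x has derivative v·cos(θ(t₀)), y has derivative v·sin(θ(t₀)), and θ has derivative u, where v = K·cos(e_θ(t₀))·min(D_max, D(t₀)) and u = −K_θ·e_θ(t₀) + w for some real w with |w − θ_d'(t₀)| ≤ ε. Then the function V_t = (1/2)(e_x² + e_y² + e_θ²) has a derivative at t₀ that is at most −K_a·(e_x(t₀)² + e_y(t₀)²) − K_θ·e_θ(t₀)² + ε·|e_θ(t₀)| − e_x(t₀)·x_d'(t₀) − e_y(t₀)·y_d'(t₀), where K_a = K·(min(D_max, D(t₀))/D(t₀))·cos²(e_θ(t₀)); consequently the derivative is at most −min(K_a, K_θ)·(e_x²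 + e_y² + e_θ²)(t₀) + ‖(e_x(t₀), e_y(t₀), e_θ(t₀))‖·‖(x_d'(t₀), y_d'(t₀), ε)‖. -/
/-!
Along the closed loop, the position part of `V̇` is `e · v (cos θ, sin θ)`. Since `(cos θ_d, sin θ_d)`
is the unit vector `-e / D`, rotating it by `e_θ` gives `e · (cos θ, sin θ) = -D cos e_θ`, so the
speed `v = K cos e_θ min(D_max, D)` contributes exactly `-K_a D²`. The heading part contributes
`-K_θ e_θ² + e_θ (θ̂'_d - θ'_d) ≤ -K_θ e_θ² + ε |e_θ|`, and the feed-forward terms `-e · (x_d', y_d')`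
remain. The second bound follows by replacing both gains with their minimum and applying
Cauchy–Schwarz to `(e_x, e_y, |e_θ|) · (-x_d', -y_d', ε)`.
-/

open Real

lemma hasDerivAt_half_sum_sq {f g h : ℝ → ℝ} {f' g' h' t : ℝ} (hf : HasDerivAt f f' t)
    (hg : HasDerivAt g g' t) (hh : HasDerivAt h h' t) :
    HasDerivAt (fun s => (1 / 2) * (f s ^ 2 + g s ^ 2 + h s ^ 2))
      (f t * f' + g t * g' + h t * h') t := by
  refine ((((hf.pow 2).add (hg.pow 2)).add (hh.pow 2)).const_mul (1 / 2 : ℝ)).congr_deriv ?_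
  norm_num
  ring

lemma mul_cos_add_add_mul_sin_add {a b D φ : ℝ} (hD : D ≠ 0) (hD2 : D ^ 2 = a ^ 2 + b ^ 2)
    (hcos : cos φ = -a / D) (hsin : sin φ = -b / D) (e : ℝ) :
    a * cos (e + φ) + b * sin (e + φ) = -D * cos e := by
  rw [cos_add, sin_add, hcos, hsin]
  field_simp
  linear_combination cos e * hD2

lemma neg_mul_sub_mul_le_neg_min_mul_add {a b A B : ℝ} (hA : 0 ≤ A) (hB : 0 ≤ B) :
    -a * A - b * B ≤ -min a b * (A + B) := by
  nlinarith [mul_le_mul_of_nonneg_right (min_le_left a b) hA,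
    mul_le_mul_of_nonneg_right (min_le_right a b) hB]

lemma mul_add_mul_add_mul_le_sqrt_mul_sqrt (a b c p q r : ℝ) :
    a * p + b * q + c * r ≤ √(a ^ 2 + b ^ 2 + c ^ 2) * √(p ^ 2 + q ^ 2 + r ^ 2) := by
  simpa [Fin.sum_univ_three, add_assoc] using
    sum_mul_le_sqrt_mul_sqrt Finset.univ ![a, b, c] ![p, q, r]

theorem lyapunov_derivative_bound_general
    (Kθ K Dmax ε : ℝ)
    (x y θ xd yd θd : ℝ → ℝ) (t₀ : ℝ) (xd' yd' θd' w : ℝ)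
    (hxd : HasDerivAt xd xd' t₀) (hyd : HasDerivAt yd yd' t₀)
    (hθd : HasDerivAt θd θd' t₀)
    (ex ey eθ : ℝ → ℝ)
    (hex : ex = fun t => x t - xd t) (hey : ey = fun t => y t - yd t)
    (heθ : eθ = fun t => θ t - θd t)
    (D : ℝ → ℝ) (hDdef : D = fun t => Real.sqrt (ex t ^ 2 + ey t ^ 2))
    (hD : 0 < D t₀)
    (hcos : Real.cos (θd t₀) = -ex t₀ / D t₀)
    (hsin : Real.sin (θd t₀) = -ey t₀ / D t₀)
    (v : ℝ) (hv : v = K * Real.cos (eθ t₀) * min Dmax (D t₀))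
    (hx : HasDerivAt x (v * Real.cos (θ t₀)) t₀)
    (hy : HasDerivAt y (v * Real.sin (θ t₀)) t₀)
    (u : ℝ) (hu : u = -Kθ * eθ t₀ + w) (hw : |w - θd'| ≤ ε)
    (hθ : HasDerivAt θ u t₀)
    (Ka : ℝ) (hKa : Ka = K * (min Dmax (D t₀) / D t₀) * Real.cos (eθ t₀) ^ 2) :
    ∃ V' : ℝ,
      HasDerivAt (fun t => (1 / 2) * (ex t ^ 2 + ey t ^ 2 + eθ t ^ 2)) V' t₀ ∧
      V' ≤ -Ka * (ex t₀ ^ 2 + ey t₀ ^ 2) - Kθ * eθ t₀ ^ 2 + ε * |eθ t₀|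
            - ex t₀ * xd' - ey t₀ * yd' ∧
      V' ≤ -min Ka Kθ * (ex t₀ ^ 2 + ey t₀ ^ 2 + eθ t₀ ^ 2)
            + Real.sqrt (ex t₀ ^ 2 + ey t₀ ^ 2 + eθ t₀ ^ 2)
              * Real.sqrt (xd' ^ 2 + yd' ^ 2 + ε ^ 2) := by
  have hD2 : D t₀ ^ 2 = ex t₀ ^ 2 + ey t₀ ^ 2 := by
    subst hDdef; exact sq_sqrt (by positivity)
  have hθ_eq : θ t₀ = eθ t₀ + θd t₀ := by subst heθ; ring
  have hradial : ex t₀ * (v * cos (θ t₀)) + ey t₀ * (v * sin (θ t₀))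
      = -Ka * (ex t₀ ^ 2 + ey t₀ ^ 2) := by
    calc _ = v * (ex t₀ * cos (eθ t₀ + θd t₀) + ey t₀ * sin (eθ t₀ + θd t₀)) := by
          rw [hθ_eq]; ring
      _ = v * (-D t₀ * cos (eθ t₀)) := by
          rw [mul_cos_add_add_mul_sin_add hD.ne' hD2 hcos hsin]
      _ = _ := by rw [hv, hKa, ← hD2]; field_simp
  have hheading : eθ t₀ * (w - θd') ≤ ε * |eθ t₀| := by
    exact (le_abs_self _).trans (by rw [abs_mul, mul_comm ε]; gcongr)
  have hex' : HasDerivAt ex (v * cos (θ t₀) - xd') t₀ := by rw [hex]; exact hx.sub hxd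
  have hey' : HasDerivAt ey (v * sin (θ t₀) - yd') t₀ := by rw [hey]; exact hy.sub hyd
  have heθ' : HasDerivAt eθ (u - θd') t₀ := by rw [heθ]; exact hθ.sub hθd
  have hbound : ex t₀ * (v * cos (θ t₀) - xd') + ey t₀ * (v * sin (θ t₀) - yd')
      + eθ t₀ * (u - θd') ≤ -Ka * (ex t₀ ^ 2 + ey t₀ ^ 2) - Kθ * eθ t₀ ^ 2 + ε * |eθ t₀| - ex t₀ * xd' - ey t₀ * yd' := by
    rw [hu]; linear_combination hradial + hheading
  refine ⟨_, hasDerivAt_half_sum_sq hex' hey' heθ', hbound, ?_⟩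
  have hgains := neg_mul_sub_mul_le_neg_min_mul_add (a := Ka) (b := Kθ)
    (add_nonneg (sq_nonneg (ex t₀)) (sq_nonneg (ey t₀))) (sq_nonneg (eθ t₀))
  have hcs := mul_add_mul_add_mul_le_sqrt_mul_sqrt (ex t₀) (ey t₀) |eθ t₀| (-xd') (-yd') ε
  rw [sq_abs, neg_sq, neg_sq] at hcs
  linear_combination hbound + hgains + hcs

theorem lyapunov_derivative_bound
    (Kθ K Dmax ε : ℝ) (hKθ : 0 < Kθ) (hK : 0 < K) (hDmax : 0 < Dmax) (hε : 0 < ε)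
    (x y θ xd yd θd : ℝ → ℝ) (t₀ : ℝ) (xd' yd' θd' w : ℝ)
    (hxd : HasDerivAt xd xd' t₀) (hyd : HasDerivAt yd yd' t₀)
    (hθd : HasDerivAt θd θd' t₀)
    (ex ey eθ : ℝ → ℝ)
    (hex : ex = fun t => x t - xd t) (hey : ey = fun t => y t - yd t)
    (heθ : eθ = fun t => θ t - θd t)
    (D : ℝ → ℝ) (hDdef : D = fun t => Real.sqrt (ex t ^ 2 + ey t ^ 2))
    (hD : 0 < D t₀)
    (hcos : Real.cos (θd t₀) = -ex t₀ / D t₀)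
    (hsin : Real.sin (θd t₀) = -ey t₀ / D t₀)
    (v : ℝ) (hv : v = K * Real.cos (eθ t₀) * min Dmax (D t₀))
    (hx : HasDerivAt x (v * Real.cos (θ t₀)) t₀)
    (hy : HasDerivAt y (v * Real.sin (θ t₀)) t₀)
    (u : ℝ) (hu : u = -Kθ * eθ t₀ + w) (hw : |w - θd'| ≤ ε)
    (hθ : HasDerivAt θ u t₀)
    (Ka : ℝ) (hKa : Ka = K * (min Dmax (D t₀) / D t₀) * Real.cos (eθ t₀) ^ 2) :
    ∃ V' : ℝ,
      HasDerivAt (fun t => (1 / 2) * (ex t ^ 2 + ey t ^ 2 + eθ t ^ 2)) V' t₀ ∧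
      V' ≤ -Ka * (ex t₀ ^ 2 + ey t₀ ^ 2) - Kθ * eθ t₀ ^ 2 + ε * |eθ t₀|
            - ex t₀ * xd' - ey t₀ * yd' ∧
      V' ≤ -min Ka Kθ * (ex t₀ ^ 2 + ey t₀ ^ 2 + eθ t₀ ^ 2)
            + Real.sqrt (ex t₀ ^ 2 + ey t₀ ^ 2 + eθ t₀ ^ 2)
              * Real.sqrt (xd' ^ 2 + yd' ^ 2 + ε ^ 2) :=
  lyapunov_derivative_bound_general Kθ K Dmax ε x y θ xd yd θd t₀ xd' yd' θd' w hxd hyd hθd ex ey eθ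
    hex hey heθ D hDdef hD hcos hsin v hv hx hy u hu hw hθ Ka hKa
end

section
/- Let E be the Euclidean plane (EuclideanSpace ℝ (Fin 2)) and U : E → ℝ. Let p : ℝ → E, θ : ℝ → ℝ, and fix t₀. Assume U has gradient F ∈ E at p(t₀) with F ≠ 0, and set D = ‖F‖, and let θ_d ∈ ℝ satisfy cos(θ_d) = −F₁/D and sin(θ_d) = −F₂/D, where F₁, F₂ are the two coordinates of F. Let e_θ = θ(t₀) − θ_d, let K > 0 and D_max > 0, and set v = K·cos(e_θ)·min(D_max, D). Assume p has derivative at t₀ equal to the vector with coordinates (v·cos(θ(t₀)), v·sin(θ(t₀))). Then the composite function t ↦ U(p(t)) has derivative at t₀ equal to −K·min(D_max, D)·D·cos²(e_θ); in particular this derivative is nonpositive. -/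
/-! Along the curve, the chain rule gives `d/dt U(p t) = ⟪F, ṗ⟫`. Since `θ_d` is the direction of
`-F`, that inner product is `-D v cos(θ - θ_d) = -D v cos e_θ`, and substituting the speed
`v = K cos e_θ min(D_max, D)` turns it into `-K min(D_max, D) D cos² e_θ ≤ 0`. -/

open Real

theorem HasGradientAt.comp_hasDerivAt_inner {E : Type*} [NormedAddCommGroup E]
    [InnerProductSpace ℝ E] [CompleteSpace E] {U : E → ℝ} {F : E} {p : ℝ → E} {w : E} {t : ℝ}
    (hU : HasGradientAt U F (p t)) (hp : HasDerivAt p w t) :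
    HasDerivAt (fun s => U (p s)) (inner ℝ F w) t := by
  have h := hU.hasFDerivAt.comp_hasDerivAt t hp
  rw [InnerProductSpace.toDual_apply_apply] at h
  exact h

theorem EuclideanSpace.apply_eq_neg_norm_mul {ι : Type*} [Fintype ι] (x : EuclideanSpace ℝ ι)
    (i : ι) {c : ℝ} (hc : c = -(x i) / ‖x‖) : x i = -(‖x‖ * c) := by
  have hx : ‖x‖ = 0 → -(x i) = 0 := fun h => by simp [norm_eq_zero.1 h]
  rw [hc, mul_div_cancel_of_imp' hx, neg_neg]

theorem inner_eq_neg_norm_mul_cos_sub (F : EuclideanSpace ℝ (Fin 2)) {θd : ℝ}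
    (hcos : cos θd = -(F 0) / ‖F‖) (hsin : sin θd = -(F 1) / ‖F‖) (v θ : ℝ) :
    inner ℝ F ((WithLp.equiv 2 (Fin 2 → ℝ)).symm ![v * cos θ, v * sin θ]) =
      -(‖F‖ * v * cos (θ - θd)) := by
  rw [PiLp.inner_apply, Fin.sum_univ_two]
  simp only [WithLp.equiv_symm_apply, PiLp.toLp_apply, Matrix.cons_val_zero, Matrix.cons_val_one,
    RCLike.inner_apply, conj_trivial, EuclideanSpace.apply_eq_neg_norm_mul F 0 hcos,
    EuclideanSpace.apply_eq_neg_norm_mul F 1 hsin, cos_sub]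
  ring

theorem potential_dissipation_general
    (U : EuclideanSpace ℝ (Fin 2) → ℝ) (p : ℝ → EuclideanSpace ℝ (Fin 2))
    (θ : ℝ → ℝ) (t₀ : ℝ)
    (F : EuclideanSpace ℝ (Fin 2)) (hF : HasGradientAt U F (p t₀))
    (D : ℝ) (hD : D = ‖F‖)
    (θd : ℝ) (hcos : Real.cos θd = -(F 0) / D) (hsin : Real.sin θd = -(F 1) / D)
    (eθ : ℝ) (heθ : eθ = θ t₀ - θd)
    (K Dmax : ℝ) (hK : 0 < K) (hDmax : 0 < Dmax)
    (v : ℝ) (hv : v = K * Real.cos eθ * min Dmax D)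
    (hp : HasDerivAt p
      ((WithLp.equiv 2 (Fin 2 → ℝ)).symm ![v * Real.cos (θ t₀), v * Real.sin (θ t₀)]) t₀) :
    HasDerivAt (fun t => U (p t)) (-(K * min Dmax D * D * Real.cos eθ ^ 2)) t₀ ∧
      -(K * min Dmax D * D * Real.cos eθ ^ 2) ≤ 0 := by
  subst hD
  have hrate := hF.comp_hasDerivAt_inner hp
  rw [inner_eq_neg_norm_mul_cos_sub F hcos hsin, ← heθ, hv] at hrate
  refine ⟨hrate.congr_deriv (by ring), ?_⟩
  have hmin : 0 ≤ min Dmax ‖F‖ := le_min hDmax.le (norm_nonneg F)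
  have : 0 ≤ K * min Dmax ‖F‖ * ‖F‖ * cos eθ ^ 2 := by positivity
  linarith

theorem potential_dissipation
    (U : EuclideanSpace ℝ (Fin 2) → ℝ) (p : ℝ → EuclideanSpace ℝ (Fin 2))
    (θ : ℝ → ℝ) (t₀ : ℝ)
    (F : EuclideanSpace ℝ (Fin 2)) (hF : HasGradientAt U F (p t₀)) (hF0 : F ≠ 0)
    (D : ℝ) (hD : D = ‖F‖)
    (θd : ℝ) (hcos : Real.cos θd = -(F 0) / D) (hsin : Real.sin θd = -(F 1) / D)
    (eθ : ℝ) (heθ : eθ = θ t₀ - θd)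
    (K Dmax : ℝ) (hK : 0 < K) (hDmax : 0 < Dmax)
    (v : ℝ) (hv : v = K * Real.cos eθ * min Dmax D)
    (hp : HasDerivAt p
      ((WithLp.equiv 2 (Fin 2 → ℝ)).symm ![v * Real.cos (θ t₀), v * Real.sin (θ t₀)]) t₀) :
    HasDerivAt (fun t => U (p t)) (-(K * min Dmax D * D * Real.cos eθ ^ 2)) t₀ ∧
      -(K * min Dmax D * D * Real.cos eθ ^ 2) ≤ 0 :=
  potential_dissipation_general U p θ t₀ F hF D hD θd hcos hsin eθ heθ K Dmax hK hDmax v hv hp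
end
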